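/- Let a and a′ be directed paths in the square annulus X, both passing below the obstruction, and both normalized so that {t ∈ [0,1] : a₁(t) ∈ (1/3,2/3)} = (1/3, 2/3) and {t ∈ [0,1] : a′₁(t) ∈ (1/3,2/3)} = (1/3, 2/3). Then the affine interpolation H(t,s) = (1−s)·a(t) + s·a′(t) avoids Q, i.e. H(t,s) ∉ Q for all (t,s) ∈ [0,1]²; consequently H is a homotopy with fixed endpoints from a to a′ such that every intermediate path H(−,s) is a directed path in X. (The affine-interpolation step in the proof of 2.1.) -/

import Mathlib

open Set

/-- The obstruction: the open square `(1/3, 2/3) × (1/3, 2/3)`. -/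
def Qobs : Set (ℝ × ℝ) := Ioo (1/3 : ℝ) (2/3) ×ˢ Ioo (1/3 : ℝ) (2/3)

/-- A directed path in `[0,1]²` avoiding `Q`, with nondecreasing coordinates,
from `(0,0)` to `(1,1)`. -/
def DiPath (Q : Set (ℝ × ℝ)) (a : ℝ → ℝ × ℝ) : Prop :=
  ContinuousOn a (Icc 0 1) ∧
  (∀ t ∈ Icc (0:ℝ) 1, a t ∈ Icc (0:ℝ) 1 ×ˢ Icc (0:ℝ) 1) ∧
  (∀ t ∈ Icc (0:ℝ) 1, a t ∉ Q) ∧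
  MonotoneOn (fun t => (a t).1) (Icc 0 1) ∧
  MonotoneOn (fun t => (a t).2) (Icc 0 1) ∧
  a 0 = (0, 0) ∧ a 1 = (1, 1)

/-- `a` passes below the obstruction. -/
def Below (a : ℝ → ℝ × ℝ) : Prop :=
  ∀ t ∈ Icc (0:ℝ) 1, (a t).1 ∈ Ioo (1/3 : ℝ) (2/3) → (a t).2 ≤ 1/3


/-! At every time `t`, all normalized paths passing below the obstruction lie in one and the same
convex region `safeRegion t` disjoint from `Q`: the half-plane left of `Q` before time `1/3`,
the half-plane below `Q` between `1/3` and `2/3`, and the half-plane right of `Q` afterwards.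
The affine interpolation of two such paths stays in that region, hence avoids `Q`. The left and
right regions are forced by the intermediate value theorem: a path leaving `{x ≤ 1/3}` before
time `1/3` would have to cross the strip `1/3 < x < 2/3`, which a normalized path only does
during `(1/3, 2/3)`. -/

section Normalized

variable {f : ℝ → ℝ} {p q t : ℝ}

lemma apply_le_of_le_of_preimage_Ioo_eq (hpq : p < q) (hf : ContinuousOn f (Icc 0 1))
    (h0 : f 0 ≤ p) (hnorm : {t ∈ Icc 0 1 | f t ∈ Ioo p q} = Ioo p q) (ht : t ∈ Icc 0 1)
    (htp : t ≤ p) : f t ≤ p := by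
  by_contra! hpt
  have hqt : q ≤ f t := by
    by_contra! htq
    have : t ∈ Ioo p q := hnorm ▸ ⟨ht, hpt, htq⟩
    linarith [this.1]
  obtain ⟨u, hu, hfu⟩ := intermediate_value_Icc ht.1 (hf.mono (Icc_subset_Icc le_rfl ht.2))
    (show (p + q) / 2 ∈ Icc (f 0) (f t) from ⟨by linarith, by linarith⟩)
  have : u ∈ Ioo p q := hnorm ▸ ⟨⟨hu.1, hu.2.trans ht.2⟩, by rw [hfu]; constructor <;> linarith⟩
  linarith [this.1, hu.2]

lemma le_apply_of_le_of_preimage_Ioo_eq (hpq : p < q) (hf : ContinuousOn f (Icc 0 1))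
    (h1 : q ≤ f 1) (hnorm : {t ∈ Icc 0 1 | f t ∈ Ioo p q} = Ioo p q) (ht : t ∈ Icc 0 1)
    (hqt : q ≤ t) : q ≤ f t := by
  by_contra! hfq
  have hfp : f t ≤ p := by
    by_contra! hpf
    have : t ∈ Ioo p q := hnorm ▸ ⟨ht, hpf, hfq⟩
    linarith [this.2]
  obtain ⟨u, hu, hfu⟩ := intermediate_value_Icc ht.2 (hf.mono (Icc_subset_Icc ht.1 le_rfl))
    (show (p + q) / 2 ∈ Icc (f t) (f 1) from ⟨by linarith, by linarith⟩)
  have : u ∈ Ioo p q := hnorm ▸ ⟨⟨ht.1.trans hu.1, hu.2⟩, by rw [hfu]; constructor <;> linarith⟩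
  linarith [this.2, hu.1]

end Normalized

def safeRegion (t : ℝ) : Set (ℝ × ℝ) :=
  if t ≤ 1/3 then {z | z.1 ≤ 1/3} else if t < 2/3 then {z | z.2 ≤ 1/3} else {z | 2/3 ≤ z.1}

lemma convex_safeRegion (t : ℝ) : Convex ℝ (safeRegion t) := by
  unfold safeRegion
  split_ifs
  · exact (convex_Iic _).linear_preimage (LinearMap.fst ℝ ℝ ℝ)
  · exact (convex_Iic _).linear_preimage (LinearMap.snd ℝ ℝ ℝ)
  · exact (convex_Ici _).linear_preimage (LinearMap.fst ℝ ℝ ℝ)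

lemma disjoint_safeRegion_Qobs (t : ℝ) : Disjoint (safeRegion t) Qobs := by
  rw [Set.disjoint_left]
  rintro z hz ⟨⟨hx₁, hx₂⟩, hy₁, -⟩
  unfold safeRegion at hz
  split_ifs at hz <;> simp only [mem_ofPred_eq] at hz <;> linarith

lemma mem_safeRegion {a : ℝ → ℝ × ℝ} (ha : DiPath Qobs a) (hb : Below a)
    (hnorm : {t ∈ Icc (0:ℝ) 1 | (a t).1 ∈ Ioo (1/3 : ℝ) (2/3)} = Ioo (1/3 : ℝ) (2/3))
    {t : ℝ} (ht : t ∈ Icc 0 1) : a t ∈ safeRegion t := by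
  obtain ⟨hc, -, -, -, -, h0, h1⟩ := ha
  unfold safeRegion
  split_ifs with h₁ h₂
  · exact apply_le_of_le_of_preimage_Ioo_eq (by norm_num) hc.fst (by simp [h0]) hnorm ht h₁
  · have : t ∈ {t ∈ Icc (0:ℝ) 1 | (a t).1 ∈ Ioo (1/3 : ℝ) (2/3)} := by
      rw [hnorm]; exact ⟨not_le.1 h₁, h₂⟩
    exact hb t this.1 this.2
  · exact le_apply_of_le_of_preimage_Ioo_eq (by norm_num) hc.fst (by simp [h1]; norm_num) hnorm ht
      (not_lt.1 h₂)

lemma Convex.one_sub_smul_add_smul_mem {E : Type*} [AddCommGroup E] [Module ℝ E] {s : Set E}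
    (hs : Convex ℝ s) {x y : E}
    (hx : x ∈ s) (hy : y ∈ s) {θ : ℝ} (hθ : θ ∈ Icc 0 1) : (1 - θ) • x + θ • y ∈ s :=
  hs hx hy (sub_nonneg.2 hθ.2) hθ.1 (sub_add_cancel 1 θ)

lemma MonotoneOn.one_sub_mul_add_mul {f g : ℝ → ℝ} {S : Set ℝ} (hf : MonotoneOn f S)
    (hg : MonotoneOn g S) {θ : ℝ} (hθ : θ ∈ Icc 0 1) :
    MonotoneOn (fun t => (1 - θ) * f t + θ * g t) S :=
  fun _ hu _ hv huv => add_le_add (mul_le_mul_of_nonneg_left (hf hu hv huv) (sub_nonneg.2 hθ.2))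
    (mul_le_mul_of_nonneg_left (hg hu hv huv) hθ.1)

lemma DiPath.one_sub_smul_add_smul {Q : Set (ℝ × ℝ)} {a a' : ℝ → ℝ × ℝ} (ha : DiPath Q a)
    (ha' : DiPath Q a') {θ : ℝ} (hθ : θ ∈ Icc 0 1)
    (hQ : ∀ t ∈ Icc (0:ℝ) 1, (1 - θ) • a t + θ • a' t ∉ Q) :
    DiPath Q (fun t => (1 - θ) • a t + θ • a' t) := by
  obtain ⟨hc, hsq, -, hm₁, hm₂, h0, h1⟩ := ha
  obtain ⟨hc', hsq', -, hm₁', hm₂', h0', h1'⟩ := ha'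
  refine ⟨(hc.const_smul (1 - θ)).add (hc'.const_smul θ),
    fun t ht => ((convex_Icc 0 1).prod (convex_Icc 0 1)).one_sub_smul_add_smul_mem
      (hsq t ht) (hsq' t ht) hθ, hQ, ?_, ?_, by simp [h0, h0'], by simp [h1, h1']⟩
  · simpa only [Prod.fst_add, Prod.smul_fst, smul_eq_mul] using hm₁.one_sub_mul_add_mul hm₁' hθ
  · simpa only [Prod.snd_add, Prod.smul_snd, smul_eq_mul] using hm₂.one_sub_mul_add_mul hm₂' hθ

/-- For two normalized directed paths in the square annulus, both passing below the
obstruction, the affine interpolation `H (t, s) = (1-s) • a t + s • a' t` avoids `Q`;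
consequently it is a homotopy with fixed endpoints from `a` to `a'` all of whose
intermediate paths are directed paths in the annulus.
(The affine-interpolation step in the proof of 2.1.) -/
theorem affine_interpolation_avoids_obstruction (a a' : ℝ → ℝ × ℝ)
    (ha : DiPath Qobs a) (ha' : DiPath Qobs a')
    (hb : Below a) (hb' : Below a')
    (hnorm : {t ∈ Icc (0:ℝ) 1 | (a t).1 ∈ Ioo (1/3 : ℝ) (2/3)} = Ioo (1/3 : ℝ) (2/3))
    (hnorm' : {t ∈ Icc (0:ℝ) 1 | (a' t).1 ∈ Ioo (1/3 : ℝ) (2/3)} = Ioo (1/3 : ℝ) (2/3)) :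
    (∀ t ∈ Icc (0:ℝ) 1, ∀ s ∈ Icc (0:ℝ) 1, (1 - s) • a t + s • a' t ∉ Qobs) ∧
    (∀ s ∈ Icc (0:ℝ) 1, DiPath Qobs (fun t => (1 - s) • a t + s • a' t)) := by
  have avoids : ∀ t ∈ Icc (0:ℝ) 1, ∀ s ∈ Icc (0:ℝ) 1, (1 - s) • a t + s • a' t ∉ Qobs :=
    fun t ht s hs => (disjoint_safeRegion_Qobs t).notMem_of_mem_left <|
      (convex_safeRegion t).one_sub_smul_add_smul_mem (mem_safeRegion ha hb hnorm ht)
        (mem_safeRegion ha' hb' hnorm' ht) hs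
  exact ⟨avoids, fun s hs => ha.one_sub_smul_add_smul ha' hs fun t ht => avoids t ht s hs⟩
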